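/- Let h : ℝⁿ → ℝ, f : ℝⁿ → ℝⁿ, and α : [0,∞) → [0,∞) be strictly increasing with α(0) = 0 and α(r) < r for all r > 0. If h(f(x)) - h(x) + α(h(x)) ≥ 0 for all x with h(x) ≥ 0, then {x | h(x) ≥ 0} is forward invariant under f. -/

import Mathlib

lemma apply_le_self_of_nonneg {α : ℝ → ℝ} (hα0 : α 0 = 0) (hαlt : ∀ r > (0:ℝ), α r < r)
    {r : ℝ} (hr : 0 ≤ r) : α r ≤ r := by
  rcases hr.eq_or_lt with rfl | hpos
  · exact hα0.le
  · exact (hαlt r hpos).le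

lemma mapsTo_superlevelSet_of_barrier {X : Type*} {h : X → ℝ} {f : X → X} {α : ℝ → ℝ}
    (hα0 : α 0 = 0) (hαlt : ∀ r > (0:ℝ), α r < r)
    (hbar : ∀ x, h x ≥ 0 → h (f x) - h x + α (h x) ≥ 0) :
    Set.MapsTo f {x | 0 ≤ h x} {x | 0 ≤ h x} := fun x hx => by
  have hstep := hbar x hx
  have hαle := apply_le_self_of_nonneg hα0 hαlt hx
  show 0 ≤ h (f x)
  linarith

theorem barrier_forward_invariant_classK_general (n : ℕ) (h : (Fin n → ℝ) → ℝ)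
    (f : (Fin n → ℝ) → (Fin n → ℝ)) (α : ℝ → ℝ)
    (hα0 : α 0 = 0)
    (hαlt : ∀ r > (0:ℝ), α r < r)
    (hbar : ∀ x, h x ≥ 0 → h (f x) - h x + α (h x) ≥ 0) :
    ∀ x ∈ {x | h x ≥ 0}, f x ∈ {x | h x ≥ 0} :=
  mapsTo_superlevelSet_of_barrier hα0 hαlt hbar

theorem barrier_forward_invariant_classK (n : ℕ) (h : (Fin n → ℝ) → ℝ)
    (f : (Fin n → ℝ) → (Fin n → ℝ)) (α : ℝ → ℝ)
    (hmono : StrictMonoOn α (Set.Ici 0)) (hα0 : α 0 = 0)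
    (hαnonneg : ∀ r ≥ (0:ℝ), α r ≥ 0)
    (hαlt : ∀ r > (0:ℝ), α r < r)
    (hbar : ∀ x, h x ≥ 0 → h (f x) - h x + α (h x) ≥ 0) :
    ∀ x ∈ {x | h x ≥ 0}, f x ∈ {x | h x ≥ 0} :=
  barrier_forward_invariant_classK_general n h f α hα0 hαlt hbar
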